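/- arXiv:2106.07802 — 5 statements merged into one kernel-verified Lean document; each statement's English description precedes it below -/
import Mathlib

section
/- Let I be a finite index set, c : I → ℝ and Δ : I → ℝ such that s := Σ_{i∈I} c_i (cos Δ_i, sin Δ_i) ∈ ℝ² is nonzero, and for γ ∈ ℝ set s(γ) := Σ_{i∈I} c_i (cos(Δ_i + γ), sin(Δ_i + γ)). If γ₁, γ₂ ∈ ℝ satisfy s(γ₁)/‖s(γ₁)‖ = s(γ₂)/‖s(γ₂)‖, then γ₁ ≡ γ₂ (mod 2π). -/
open Real Matrix

/-! Writing `v := s 0`, every `s γ` is the rotation of `v` by `γ`. Rotations preserve length, so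
equal normalisations force `s γ₁ = s γ₂`; and since `v ≠ 0`, two rotations agreeing on `v` have the
same cosine and sine, hence the same angle. -/

theorem eq_of_inv_sqrt_dotProduct_smul_eq {n : Type*} [Fintype n] {u w : n → ℝ} (hlen : u ⬝ᵥ u = w ⬝ᵥ w)
    (h : (√(u ⬝ᵥ u))⁻¹ • u = (√(w ⬝ᵥ w))⁻¹ • w) : u = w := by
  rw [hlen] at h
  by_cases hw : w = 0
  · rw [hw, dotProduct_zero, dotProduct_self_eq_zero] at hlen
    rw [hlen, hw]
  · have hsqrt : √(w ⬝ᵥ w) ≠ 0 := by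
      rwa [Ne, sqrt_eq_zero (x := w ⬝ᵥ w) (dotProduct_star_self_nonneg w),
        dotProduct_self_eq_zero]
    exact smul_right_injective _ (inv_ne_zero hsqrt) h

noncomputable def rotationMatrix (γ : ℝ) : Matrix (Fin 2) (Fin 2) ℝ :=
  !![cos γ, -sin γ; sin γ, cos γ]

theorem rotationMatrix_mulVec_cos_sin (γ Δ : ℝ) :
    rotationMatrix γ *ᵥ ![cos Δ, sin Δ] = ![cos (Δ + γ), sin (Δ + γ)] := by
  ext j
  fin_cases j <;> simp [rotationMatrix, cos_add, sin_add] <;> ring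

theorem dotProduct_rotationMatrix_mulVec_self (γ : ℝ) (v : Fin 2 → ℝ) :
    (rotationMatrix γ *ᵥ v) ⬝ᵥ (rotationMatrix γ *ᵥ v) = v ⬝ᵥ v := by
  simp only [dotProduct, mulVec, rotationMatrix, of_apply, cons_val', cons_val_fin_one,
    Fin.sum_univ_two, cons_val_zero, cons_val_one, neg_mul]
  linear_combination (v 0 ^ 2 + v 1 ^ 2) * sin_sq_add_cos_sq γ

theorem angle_eq_of_rotationMatrix_mulVec_eq {γ₁ γ₂ : ℝ} {v : Fin 2 → ℝ} (hv : v ≠ 0)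
    (h : rotationMatrix γ₁ *ᵥ v = rotationMatrix γ₂ *ᵥ v) : (γ₁ : Angle) = γ₂ := by
  have h0 := congrFun h 0
  have h1 := congrFun h 1
  simp only [mulVec, dotProduct, rotationMatrix, of_apply, cons_val', cons_val_fin_one,
    cons_val_zero, Fin.sum_univ_two, cons_val_one, neg_mul] at h0 h1
  have hnorm : v 0 * v 0 + v 1 * v 1 ≠ 0 := by
    simpa [dotProduct, Fin.sum_univ_two] using mt dotProduct_self_eq_zero.mp hv
  refine Angle.cos_sin_inj (mul_left_cancel₀ hnorm ?_) (mul_left_cancel₀ hnorm ?_)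
  · linear_combination v 0 * h0 + v 1 * h1
  · linear_combination v 0 * h1 - v 1 * h0

theorem sum_smul_cos_sin_add {I : Type*} [Fintype I] (c Δ : I → ℝ) (γ : ℝ) :
    ∑ i, c i • ![cos (Δ i + γ), sin (Δ i + γ)] =
      rotationMatrix γ *ᵥ ∑ i, c i • ![cos (Δ i), sin (Δ i)] := by
  simp only [mulVec_sum, mulVec_smul, rotationMatrix_mulVec_cos_sin]

/-- **Proposition 1 (uniqueness part).** If `s γ := Σ_i c i • (cos (Δ i + γ), sin (Δ i + γ))`
with `s 0 ≠ 0`, then the normalized vector `s γ / ‖s γ‖` (Euclidean norm) determines `γ`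
modulo `2π`. -/
theorem stmt1 {I : Type*} [Fintype I] (c Δ : I → ℝ)
    (s : ℝ → (Fin 2 → ℝ))
    (hs : ∀ γ, s γ = ∑ i, c i • ![Real.cos (Δ i + γ), Real.sin (Δ i + γ)])
    (hne : s 0 ≠ 0)
    (γ₁ γ₂ : ℝ)
    (h : (Real.sqrt (s γ₁ ⬝ᵥ s γ₁))⁻¹ • s γ₁ = (Real.sqrt (s γ₂ ⬝ᵥ s γ₂))⁻¹ • s γ₂) :
    (γ₁ : Real.Angle) = (γ₂ : Real.Angle) := by
  set v := ∑ i, c i • ![cos (Δ i), sin (Δ i)]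
  have hv : v ≠ 0 := by simpa only [hs, add_zero] using hne
  have hrot (γ : ℝ) : s γ = rotationMatrix γ *ᵥ v := (hs γ).trans (sum_smul_cos_sin_add c Δ γ)
  rw [hrot, hrot] at h
  refine angle_eq_of_rotationMatrix_mulVec_eq hv (eq_of_inv_sqrt_dotProduct_smul_eq ?_ h)
  rw [dotProduct_rotationMatrix_mulVec_self, dotProduct_rotationMatrix_mulVec_self]
end

section
/- Let a > 0, X = (0,0,0), Y = (a,0,0) in ℝ³, and let T, Z ∈ ℝ³ have nonzero projections onto the yz-plane. Let H_γ be the rotation of ℝ³ about the x-axis by angle γ, given by the matrix [[1,0,0],[0,cos γ,−sin γ],[0,sin γ,cos γ]]. Then the dihedral angle satisfies ∠(XY(H_γ T), XYZ) ≡ ∠(XYT, XYZ) − γ (mod 2π). -/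
open Real Matrix Complex

open scoped Matrix

/-- The signed dihedral angle `∠(ABC, ABD)`, defined as
`atan2 (‖b₂‖ ⟨b₁, b₂×b₃⟩) (⟨b₁×b₂, b₂×b₃⟩)` with `b₁ = A − C`, `b₂ = B − A`, `b₃ = D − B`,
where `atan2 y x` is the complex argument of `x + iy`. -/
noncomputable def dihedral (A B C D : Fin 3 → ℝ) : ℝ :=
  Complex.arg ((((A - C) ⨯₃ (B - A)) ⬝ᵥ ((B - A) ⨯₃ (D - B)) : ℝ) +
    (Real.sqrt ((B - A) ⬝ᵥ (B - A)) * ((A - C) ⬝ᵥ ((B - A) ⨯₃ (D - B)))) * Complex.I)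

/-!
For the bond `X = 0`, `Y = a e₁`, the complex number whose argument defines `∠(XYC, XYD)` is
`a² · w(D) · conj (w(C))`, where `w(v) = v₁ + v₂ i` is the projection of `v` onto the yz-plane
read as a complex number. Hence the dihedral angle is `arg w(D) - arg w(C)`, and since `H_γ`
acts on `w` as multiplication by `exp (γ i)`, it adds `γ` to `arg w(T)`.
-/

open scoped ComplexConjugate

def yzComplex (v : Fin 3 → ℝ) : ℂ := v 1 + v 2 * I

noncomputable def rotX (γ : ℝ) : Matrix (Fin 3) (Fin 3) ℝ :=
  !![1, 0, 0; 0, Real.cos γ, -Real.sin γ; 0, Real.sin γ, Real.cos γ]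

theorem yzComplex_eq_zero_iff {v : Fin 3 → ℝ} : yzComplex v = 0 ↔ (v 1, v 2) = (0, 0) := by
  simp [yzComplex, Complex.ext_iff]

theorem yzComplex_rotX_mulVec (γ : ℝ) (v : Fin 3 → ℝ) :
    yzComplex (rotX γ *ᵥ v) = exp (γ * I) * yzComplex v := by
  simp [yzComplex, rotX, exp_mul_I, mulVec, dotProduct, Fin.sum_univ_three, Complex.ext_iff,
    ← ofReal_cos, ← ofReal_sin]
  constructor <;> ring

theorem arg_yzComplex_rotX_mulVec {v : Fin 3 → ℝ} (hv : yzComplex v ≠ 0) (γ : ℝ) :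
    (arg (yzComplex (rotX γ *ᵥ v)) : Real.Angle) = arg (yzComplex v) + γ := by
  rw [yzComplex_rotX_mulVec, arg_mul_coe_angle (exp_ne_zero _) hv, arg_exp_mul_I,
    Real.Angle.coe_toIocMod, add_comm]

theorem dihedral_origin_xAxis {a : ℝ} (ha : 0 < a) (C D : Fin 3 → ℝ) :
    dihedral ![0, 0, 0] ![a, 0, 0] C D = arg (yzComplex D * conj (yzComplex C)) := by
  have hsqrt : √((![a, 0, 0] - ![0, 0, 0]) ⬝ᵥ (![a, 0, 0] - ![0, 0, 0]) : ℝ) = a := by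
    simp [dotProduct, Fin.sum_univ_three, Real.sqrt_mul_self ha.le]
  unfold dihedral
  rw [hsqrt, ← arg_real_mul (yzComplex D * conj (yzComplex C)) (pow_pos ha 2)]
  congr 1
  simp [yzComplex, crossProduct, dotProduct, Fin.sum_univ_three, Complex.ext_iff, vecHead, vecTail,
    -ofReal_pow]
  constructor <;> ring

theorem coe_dihedral_origin_xAxis {a : ℝ} (ha : 0 < a) {C D : Fin 3 → ℝ}
    (hC : yzComplex C ≠ 0) (hD : yzComplex D ≠ 0) :
    (dihedral ![0, 0, 0] ![a, 0, 0] C D : Real.Angle) = arg (yzComplex D) - arg (yzComplex C) := by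
  rw [dihedral_origin_xAxis ha, arg_mul_coe_angle hD ((map_ne_zero _).2 hC), arg_conj_coe_angle,
    sub_eq_add_neg]

/-- Rotating `T` about the bond (x-)axis by `γ` shifts the dihedral angle across the bond:
`∠(XY(H_γ T), XYZ) ≡ ∠(XYT, XYZ) − γ (mod 2π)`. -/
theorem stmt3 (a : ℝ) (ha : 0 < a) (T Z : Fin 3 → ℝ)
    (X Y : Fin 3 → ℝ) (hX : X = ![0, 0, 0]) (hY : Y = ![a, 0, 0])
    (hT : (T 1, T 2) ≠ (0, 0)) (hZ : (Z 1, Z 2) ≠ (0, 0))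
    (γ : ℝ) (H : Matrix (Fin 3) (Fin 3) ℝ)
    (hH : H = !![1, 0, 0; 0, Real.cos γ, -Real.sin γ; 0, Real.sin γ, Real.cos γ]) :
    (dihedral X Y (H *ᵥ T) Z : Real.Angle) =
      (dihedral X Y T Z : Real.Angle) - (γ : Real.Angle) := by
  obtain rfl : H = rotX γ := hH
  subst hX hY
  have hT' : yzComplex T ≠ 0 := yzComplex_eq_zero_iff.not.2 hT
  have hZ' : yzComplex Z ≠ 0 := yzComplex_eq_zero_iff.not.2 hZ
  have hHT' : yzComplex (rotX γ *ᵥ T) ≠ 0 := by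
    rw [yzComplex_rotX_mulVec]
    exact mul_ne_zero (exp_ne_zero _) hT'
  rw [coe_dihedral_origin_xAxis ha hHT' hZ', coe_dihedral_origin_xAxis ha hT' hZ',
    arg_yzComplex_rotX_mulVec hT']
  abel
end

section
/- Let a > 0, X = (0,0,0), Y = (a,0,0) in ℝ³, and let T, T' ∈ ℝ³ have nonzero projections onto the yz-plane. Let H_γ be the rotation of ℝ³ about the x-axis by angle γ, given by the matrix [[1,0,0],[0,cos γ,−sin γ],[0,sin γ,cos γ]]. Then ∠(XY(H_γ T), XY(H_γ T')) ≡ ∠(XYT, XYT') (mod 2π). -/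
open Real Matrix Complex

open scoped Matrix

theorem dotProduct_mulVec_mulVec_of_mem_orthogonalGroup {n R : Type*} [Fintype n]
    [DecidableEq n] [CommRing R] {M : Matrix n n R} (hM : M ∈ orthogonalGroup n R)
    (u v : n → R) : (M *ᵥ u) ⬝ᵥ (M *ᵥ v) = u ⬝ᵥ v := by
  rw [dotProduct_mulVec, vecMul_mulVec, (mem_orthogonalGroup_iff' n R).1 hM, vecMul_one]

theorem mulVec_dotProduct_cross_mulVec {R : Type*} [CommRing R] (M : Matrix (Fin 3) (Fin 3) R)
    (u v w : Fin 3 → R) :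
    (M *ᵥ u) ⬝ᵥ (M *ᵥ v) ⨯₃ (M *ᵥ w) = M.det * (u ⬝ᵥ v ⨯₃ w) := by
  have hrows : of ![M *ᵥ u, M *ᵥ v, M *ᵥ w] = of ![u, v, w] * Mᵀ := by
    ext i j
    fin_cases i <;> simp [mulVec, mul_apply, dotProduct, mul_comm]
  rw [triple_product_eq_det, triple_product_eq_det]
  change det (of ![M *ᵥ u, M *ᵥ v, M *ᵥ w]) = M.det * det (of ![u, v, w])
  rw [hrows, det_mul, det_transpose, mul_comm]

theorem dihedral_mulVec_of_mem_specialOrthogonalGroup {M : Matrix (Fin 3) (Fin 3) ℝ}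
    (hM : M ∈ specialOrthogonalGroup (Fin 3) ℝ) (A B C D : Fin 3 → ℝ) :
    dihedral (M *ᵥ A) (M *ᵥ B) (M *ᵥ C) (M *ᵥ D) = dihedral A B C D := by
  obtain ⟨hOrth, hDet⟩ := mem_specialOrthogonalGroup_iff.1 hM
  simp only [dihedral, ← mulVec_sub, cross_dot_cross,
    dotProduct_mulVec_mulVec_of_mem_orthogonalGroup hOrth, mulVec_dotProduct_cross_mulVec, hDet,
    one_mul]

theorem rotationX_mem_specialOrthogonalGroup (γ : ℝ) :
    !![1, 0, 0; 0, Real.cos γ, -Real.sin γ; 0, Real.sin γ, Real.cos γ] ∈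
      specialOrthogonalGroup (Fin 3) ℝ := by
  refine mem_specialOrthogonalGroup_iff.2 ⟨(mem_orthogonalGroup_iff (Fin 3) ℝ).2 ?_, ?_⟩
  · ext i j
    fin_cases i <;> fin_cases j <;>
      simp [mul_apply, Fin.sum_univ_three] <;> nlinarith [Real.sin_sq_add_cos_sq γ]
  · simp [det_fin_three]
    nlinarith [Real.sin_sq_add_cos_sq γ]

theorem rotationX_mulVec_xAxis (γ c : ℝ) :
    !![1, 0, 0; 0, Real.cos γ, -Real.sin γ; 0, Real.sin γ, Real.cos γ] *ᵥ ![c, 0, 0] =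
      ![c, 0, 0] := by
  ext i
  fin_cases i <;> simp [mulVec, dotProduct, Fin.sum_univ_three]

theorem stmt4_general (a : ℝ) (T T' : Fin 3 → ℝ)
    (X Y : Fin 3 → ℝ) (hX : X = ![0, 0, 0]) (hY : Y = ![a, 0, 0])
    (γ : ℝ) (H : Matrix (Fin 3) (Fin 3) ℝ)
    (hH : H = !![1, 0, 0; 0, Real.cos γ, -Real.sin γ; 0, Real.sin γ, Real.cos γ]) :
    (dihedral X Y (H *ᵥ T) (H *ᵥ T') : Real.Angle) = (dihedral X Y T T' : Real.Angle) := by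
  subst hX hY hH
  rw [← dihedral_mulVec_of_mem_specialOrthogonalGroup (rotationX_mem_specialOrthogonalGroup γ)
    ![0, 0, 0] ![a, 0, 0] T T', rotationX_mulVec_xAxis, rotationX_mulVec_xAxis]

/-- Jointly rotating two neighbors `T, T'` on the same side of the bond about the bond
(x-)axis by `γ` leaves their mutual dihedral angle unchanged:
`∠(XY(H_γ T), XY(H_γ T')) ≡ ∠(XYT, XYT') (mod 2π)`. -/
theorem stmt4 (a : ℝ) (ha : 0 < a) (T T' : Fin 3 → ℝ)
    (X Y : Fin 3 → ℝ) (hX : X = ![0, 0, 0]) (hY : Y = ![a, 0, 0])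
    (hT : (T 1, T 2) ≠ (0, 0)) (hT' : (T' 1, T' 2) ≠ (0, 0))
    (γ : ℝ) (H : Matrix (Fin 3) (Fin 3) ℝ)
    (hH : H = !![1, 0, 0; 0, Real.cos γ, -Real.sin γ; 0, Real.sin γ, Real.cos γ]) :
    (dihedral X Y (H *ᵥ T) (H *ᵥ T') : Real.Angle) = (dihedral X Y T T' : Real.Angle) :=
  stmt4_general a T T' X Y hX hY γ H hH
end

section
/- Let a > 0, X = (0,0,0), Y = (a,0,0) in ℝ³, and let T_i, T_k, Z_j, Z_l ∈ ℝ³ each have nonzero projection onto the yz-plane. Then the dihedral angles satisfy ∠(XYT_i, XYZ_j) ≡ ∠(XYT_k, XYZ_l) + ∠(XYT_i, XYT_k) + ∠(XYZ_l, XYZ_j) (mod 2π). -/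
/-! With the bond `XY` along the first axis, the complex number whose argument defines
`∠(XYC, XYD)` is `a² · conj c · d`, where `c` and `d` are the projections of `C` and `D` onto
the yz-plane read as complex numbers. Hence the dihedral angle is `arg d - arg c` modulo `2π`,
and the identity telescopes. -/

open Real Matrix Complex

open scoped Matrix

open scoped ComplexConjugate

def yzProj (v : Fin 3 → ℝ) : ℂ := ⟨v 1, v 2⟩

lemma yzProj_ne_zero_iff {v : Fin 3 → ℝ} : yzProj v ≠ 0 ↔ (v 1, v 2) ≠ (0, 0) := by
  simp [yzProj, Complex.ext_iff]

lemma dihedral_origin_axis {a : ℝ} (ha : 0 < a) (C D : Fin 3 → ℝ) :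
    dihedral ![0, 0, 0] ![a, 0, 0] C D = arg (conj (yzProj C) * yzProj D) := by
  have hsqrt : √((![a, 0, 0] - ![0, 0, 0] : Fin 3 → ℝ) ⬝ᵥ (![a, 0, 0] - ![0, 0, 0])) = a := by
    simp [dotProduct, Fin.sum_univ_three, Real.sqrt_mul_self ha.le]
  rw [dihedral, hsqrt, ← arg_real_mul (conj (yzProj C) * yzProj D) (pow_pos ha 2)]
  congr 1
  apply Complex.ext <;>
    simp [yzProj, crossProduct, dotProduct, Fin.sum_univ_three, vecHead, vecTail, sq] <;> ring

lemma dihedral_origin_axis_coe_angle {a : ℝ} (ha : 0 < a) {C D : Fin 3 → ℝ}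
    (hC : yzProj C ≠ 0) (hD : yzProj D ≠ 0) :
    (dihedral ![0, 0, 0] ![a, 0, 0] C D : Angle) =
      (arg (yzProj D) : Angle) - arg (yzProj C) := by
  rw [dihedral_origin_axis ha, arg_mul_coe_angle ((map_ne_zero _).2 hC) hD, arg_conj_coe_angle]
  abel

/-- **Equation (3) of the paper.** Dihedral angles about a common bond are additive:
`∠(XYTᵢ, XYZⱼ) ≡ ∠(XYTₖ, XYZₗ) + ∠(XYTᵢ, XYTₖ) + ∠(XYZₗ, XYZⱼ) (mod 2π)`. -/
theorem stmt5 (a : ℝ) (ha : 0 < a) (Ti Tk Zj Zl : Fin 3 → ℝ)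
    (X Y : Fin 3 → ℝ) (hX : X = ![0, 0, 0]) (hY : Y = ![a, 0, 0])
    (hTi : (Ti 1, Ti 2) ≠ (0, 0)) (hTk : (Tk 1, Tk 2) ≠ (0, 0))
    (hZj : (Zj 1, Zj 2) ≠ (0, 0)) (hZl : (Zl 1, Zl 2) ≠ (0, 0)) :
    (dihedral X Y Ti Zj : Real.Angle) =
      (dihedral X Y Tk Zl : Real.Angle) + (dihedral X Y Ti Tk : Real.Angle) +
        (dihedral X Y Zl Zj : Real.Angle) := by
  subst hX hY
  simp only [← yzProj_ne_zero_iff] at hTi hTk hZj hZl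
  rw [dihedral_origin_axis_coe_angle ha hTi hZj, dihedral_origin_axis_coe_angle ha hTk hZl,
    dihedral_origin_axis_coe_angle ha hTi hTk, dihedral_origin_axis_coe_angle ha hZl hZj]
  abel
end

section
/- Let I be a finite index set, c : I → ℝ, Δᶜᵘʳ : I → ℝ, and γ* ∈ ℝ. Define Δ*_i := Δᶜᵘʳ_i − γ* for each i, s* := Σ_{i∈I} c_i (cos Δ*_i, sin Δ*_i) ∈ ℝ², and Aᶜᵘʳ := Σ_{i∈I} c_i A_{Δᶜᵘʳ_i}, where A_Δ := [[cos Δ, sin Δ],[sin Δ, −cos Δ]]. If s* ≠ 0, then (Aᶜᵘʳ)ᵀ s* ≠ 0 and (Aᶜᵘʳ)ᵀ s* / ‖(Aᶜᵘʳ)ᵀ s*‖ = (cos γ*, sin γ*). -/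
open Matrix Real

/-! Identify `ℝ²` with `ℂ` and put `z = Σ cᵢ e^{iΔᶜᵘʳᵢ} = C + iS`. Then `s* = z e^{-iγ*}`, and the
symmetric matrix `Aᶜᵘʳ = [[C, S], [S, -C]]` acts as `w ↦ z w̄`, so
`(Aᶜᵘʳ)ᵀ s* = z · z̄ e^{iγ*} = |z|² (cos γ*, sin γ*)`; moreover `s* ≠ 0` forces `|z|² > 0`. -/

section CommRing

variable {R ι : Type*} [CommRing R] [Fintype ι]

theorem sum_smul_vecCons_two (c a b : ι → R) :
    ∑ i, c i • ![a i, b i] = ![∑ i, c i * a i, ∑ i, c i * b i] := by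
  ext k
  fin_cases k <;> simp [Finset.sum_apply]

theorem sum_smul_of_symm_traceless (c a b : ι → R) :
    ∑ i, c i • !![a i, b i; b i, -a i] =
      !![∑ i, c i * a i, ∑ i, c i * b i; ∑ i, c i * b i, -∑ i, c i * a i] := by
  ext j k
  fin_cases j <;> fin_cases k <;> simp [Matrix.sum_apply, Finset.sum_neg_distrib]

theorem transpose_symm_traceless_mulVec_rotate (a b u v : R) :
    !![a, b; b, -a]ᵀ *ᵥ ![a * u + b * v, b * u - a * v] = (a ^ 2 + b ^ 2) • ![u, v] := by
  ext k
  fin_cases k <;> simp [mulVec, dotProduct, Fin.sum_univ_two] <;> ring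

end CommRing

theorem sum_smul_cos_sin_sub {ι : Type*} [Fintype ι] (c Δ : ι → ℝ) (γ : ℝ) :
    ∑ i, c i • ![cos (Δ i - γ), sin (Δ i - γ)] =
      ![(∑ i, c i * cos (Δ i)) * cos γ + (∑ i, c i * sin (Δ i)) * sin γ,
        (∑ i, c i * sin (Δ i)) * cos γ - (∑ i, c i * cos (Δ i)) * sin γ] := by
  simp only [sum_smul_vecCons_two, cos_sub, sin_sub, mul_add, mul_sub, Finset.sum_add_distrib,
    Finset.sum_sub_distrib, Finset.sum_mul, mul_assoc]

theorem sq_add_sq_pos_of_rotate_ne_zero {a b u v : ℝ}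
    (h : ![a * u + b * v, b * u - a * v] ≠ 0) : 0 < a ^ 2 + b ^ 2 := by
  by_contra hle
  have ha : a = 0 := by nlinarith [sq_nonneg a, sq_nonneg b]
  have hb : b = 0 := by nlinarith [sq_nonneg a, sq_nonneg b]
  exact h (by simp [ha, hb])

theorem dotProduct_cos_sin_self (γ : ℝ) : ![cos γ, sin γ] ⬝ᵥ ![cos γ, sin γ] = 1 := by
  simp [dotProduct, Fin.sum_univ_two, ← sq, cos_sq_add_sin_sq]

theorem inv_sqrt_dotProduct_self_smul_eq {n : ℕ} {r : ℝ} (hr : 0 < r) {w : Fin n → ℝ}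
    (hw : w ⬝ᵥ w = 1) : (√((r • w) ⬝ᵥ (r • w)))⁻¹ • (r • w) = w := by
  rw [smul_dotProduct, dotProduct_smul, hw, smul_eq_mul, smul_eq_mul, mul_one, ← sq,
    sqrt_sq hr.le, smul_smul, inv_mul_cancel₀ hr.ne', one_smul]

theorem ne_zero_of_dotProduct_self_eq_one {n : ℕ} {w : Fin n → ℝ} (hw : w ⬝ᵥ w = 1) : w ≠ 0 := by
  rintro rfl
  simp at hw

/-- **Correctness of the torsion-angle recovery formula.** With current dihedral angles
`Δᶜᵘʳ i`, target angles `Δ* i = Δᶜᵘʳ i − γ*`, `s* = Σ_i c i • (cos Δ*_i, sin Δ*_i)` and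
`Aᶜᵘʳ = Σ_i c i • A_{Δᶜᵘʳ i}`, if `s* ≠ 0` then `(Aᶜᵘʳ)ᵀ s* ≠ 0` and
`(Aᶜᵘʳ)ᵀ s* / ‖(Aᶜᵘʳ)ᵀ s*‖ = (cos γ*, sin γ*)`. -/
theorem stmt14 {I : Type*} [Fintype I] (c Δcur : I → ℝ) (γstar : ℝ)
    (Δstar : I → ℝ) (hΔ : ∀ i, Δstar i = Δcur i - γstar)
    (sstar : Fin 2 → ℝ)
    (hs : sstar = ∑ i, c i • ![Real.cos (Δstar i), Real.sin (Δstar i)])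
    (Acur : Matrix (Fin 2) (Fin 2) ℝ)
    (hAcur : Acur = ∑ i, c i • !![Real.cos (Δcur i), Real.sin (Δcur i);
                                  Real.sin (Δcur i), -Real.cos (Δcur i)])
    (hne : sstar ≠ 0) :
    Acurᵀ *ᵥ sstar ≠ 0 ∧
    (Real.sqrt ((Acurᵀ *ᵥ sstar) ⬝ᵥ (Acurᵀ *ᵥ sstar)))⁻¹ • (Acurᵀ *ᵥ sstar)
      = ![Real.cos γstar, Real.sin γstar] := by
  have hs' := hs.trans (by simp only [hΔ]; exact sum_smul_cos_sin_sub c Δcur γstar)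
  have hr := sq_add_sq_pos_of_rotate_ne_zero (hs' ▸ hne)
  rw [hAcur, sum_smul_of_symm_traceless, hs', transpose_symm_traceless_mulVec_rotate]
  have hunit := dotProduct_cos_sin_self γstar
  exact ⟨smul_ne_zero hr.ne' (ne_zero_of_dotProduct_self_eq_one hunit),
    inv_sqrt_dotProduct_self_smul_eq hr hunit⟩
end
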